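/- arXiv:2411.08367 — 4 statements merged into one kernel-verified Lean document; each statement's English description precedes it below -/
import Mathlib

section
/- In the concentric mixture of Mallows model with G groups, for any s with 1 ≤ s < G, α = Σ_{g=1}^s p_g, and any permutation τ with d(τ,σ*) ≥ 1, the probability of observing τ given the ground truth satisfies Pr_s(τ|σ*) ≤ α·φ_s/Z(φ_1,m) + (1−α)·φ_G/Z(φ_{s+1},m). -/
/-
Every non-central ranking has Kendall–Tau distance at least 1 from the centre, so each
component contributes at most `p_g φ_g / Z(φ_g, m)`. Split the groups at `s`. For `g ≤ s`,
monotonicity gives `φ_g ≤ φ_s` and `Z(φ_1, m) ≤ Z(φ_g, m)`; for `g > s`, `φ_g ≤ φ_G` and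
`Z(φ_{s+1}, m) ≤ Z(φ_g, m)`. The weights of the two blocks sum to `α` and `1 - α`.
-/

/-- Kendall–Tau distance between two permutations of `Fin m`:
the number of pairs `a < b` whose relative order differs under `σ` and `τ`. -/
def kendallTau {m : ℕ} (σ τ : Equiv.Perm (Fin m)) : ℕ :=
  ((Finset.univ : Finset (Fin m × Fin m)).filter
    (fun q => q.1 < q.2 ∧
      ((σ q.1 < σ q.2 ∧ τ q.2 < τ q.1) ∨ (σ q.2 < σ q.1 ∧ τ q.1 < τ q.2)))).card

/-- Mallows normalization constant `Z(φ, m) = Σ_{σ ∈ S_m} φ^{d(σ, id)}`. -/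
noncomputable def mallowsZ (m : ℕ) (φ : ℝ) : ℝ :=
  ∑ σ : Equiv.Perm (Fin m), φ ^ kendallTau σ 1

/-- Concentric mixture of Mallows with groups indexed `1,…,G`:
`Pr_s(σ | σ') = Σ_{g=1}^G p_g · φ_g^{d(σ,σ')} / Z(φ_g, m)`. -/
noncomputable def cmmProb (m G : ℕ) (p φ : ℕ → ℝ) (σ σ' : Equiv.Perm (Fin m)) : ℝ :=
  ∑ g ∈ Finset.Icc 1 G, p g * φ g ^ kendallTau σ σ' / mallowsZ m (φ g)

open Finset

lemma mallowsZ_pos (m : ℕ) {φ : ℝ} (hφ : 0 < φ) : 0 < mallowsZ m φ :=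
  sum_pos (fun _ _ => pow_pos hφ _) ⟨1, mem_univ 1⟩

lemma mallowsZ_mono (m : ℕ) {φ ψ : ℝ} (hφ : 0 ≤ φ) (hφψ : φ ≤ ψ) :
    mallowsZ m φ ≤ mallowsZ m ψ :=
  sum_le_sum fun _ _ => pow_le_pow_left₀ hφ hφψ _

lemma pow_div_mallowsZ_le {m d : ℕ} {ψ φ b : ℝ} (hd : d ≠ 0) (hψ : 0 < ψ) (hψφ : ψ ≤ φ)
    (hφ1 : φ ≤ 1) (hφb : φ ≤ b) :
    φ ^ d / mallowsZ m φ ≤ b / mallowsZ m ψ := by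
  have hφ : 0 < φ := hψ.trans_le hψφ
  exact div_le_div₀ (hφ.le.trans hφb) ((pow_le_of_le_one hφ.le hφ1 hd).trans hφb)
    (mallowsZ_pos m hψ) (mallowsZ_mono m hψ.le hψφ)

lemma sum_mul_le_sum_mul_of_le {ι : Type*} (t : Finset ι) {p f : ι → ℝ} {c : ℝ}
    (hp : ∀ i ∈ t, 0 ≤ p i) (hf : ∀ i ∈ t, f i ≤ c) :
    ∑ i ∈ t, p i * f i ≤ (∑ i ∈ t, p i) * c := by
  rw [sum_mul]
  exact sum_le_sum fun i hi => mul_le_mul_of_nonneg_left (hf i hi) (hp i hi)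

lemma sum_Icc_one_add_sum_Ioc {M : Type*} [AddCommMonoid M] (f : ℕ → M) {s G : ℕ}
    (hsG : s ≤ G) :
    ∑ g ∈ Icc 1 s, f g + ∑ g ∈ Ioc s G, f g = ∑ g ∈ Icc 1 G, f g := by
  simpa only [← Icc_add_one_left_eq_Ioc, zero_add] using sum_Ioc_consecutive f s.zero_le hsG

lemma cmmProb_eq_sum_mul (m G : ℕ) (p φ : ℕ → ℝ) (σ σ' : Equiv.Perm (Fin m)) :
    cmmProb m G p φ σ σ' =
      ∑ g ∈ Icc 1 G, p g * (φ g ^ kendallTau σ σ' / mallowsZ m (φ g)) := by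
  simp only [cmmProb, mul_div_assoc]

theorem cmm_nontruth_prob_upper_bound_general
    (m G s : ℕ) (hsG : s < G) (p φ : ℕ → ℝ)
    (hp : ∀ g ∈ Finset.Icc 1 G, 0 ≤ p g)
    (hpsum : ∑ g ∈ Finset.Icc 1 G, p g = 1)
    (hφpos : 0 < φ 1)
    (hφmono : ∀ g h, 1 ≤ g → g ≤ h → h ≤ G → φ g ≤ φ h)
    (hφle : φ G ≤ 1)
    (σstar τ : Equiv.Perm (Fin m)) (hτ : 1 ≤ kendallTau τ σstar) :
    cmmProb m G p φ τ σstar ≤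
      (∑ g ∈ Finset.Icc 1 s, p g) * φ s / mallowsZ m (φ 1)
        + (1 - ∑ g ∈ Finset.Icc 1 s, p g) * φ G / mallowsZ m (φ (s + 1)) := by
  have hd : kendallTau τ σstar ≠ 0 := by omega
  have hφ1 : ∀ g, 1 ≤ g → g ≤ G → φ g ≤ 1 := fun g hg hgG =>
    (hφmono g G hg hgG le_rfl).trans hφle
  have hφs1 : 0 < φ (s + 1) := hφpos.trans_le (hφmono 1 (s + 1) le_rfl (by omega) hsG)
  rw [cmmProb_eq_sum_mul, ← sum_Icc_one_add_sum_Ioc _ hsG.le, ← hpsum,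
    ← sum_Icc_one_add_sum_Ioc _ hsG.le, add_sub_cancel_left, mul_div_assoc, mul_div_assoc]
  gcongr
  · refine sum_mul_le_sum_mul_of_le _ (fun g hg => hp g (Icc_subset_Icc_right hsG.le hg))
      fun g hg => ?_
    obtain ⟨hg1, hgs⟩ := mem_Icc.1 hg
    exact pow_div_mallowsZ_le hd hφpos (hφmono 1 g le_rfl hg1 (by omega))
      (hφ1 g hg1 (by omega)) (hφmono g s hg1 hgs hsG.le)
  · have hIoc : Ioc s G ⊆ Icc 1 G := fun g hg => by
      rw [mem_Ioc] at hg
      exact mem_Icc.2 ⟨by omega, hg.2⟩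
    refine sum_mul_le_sum_mul_of_le _ (fun g hg => hp g (hIoc hg)) fun g hg => ?_
    obtain ⟨hsg, hgG⟩ := mem_Ioc.1 hg
    exact pow_div_mallowsZ_le hd hφs1 (hφmono (s + 1) g (by omega) hsg hgG)
      (hφ1 g (by omega) hgG) (hφmono g G (by omega) hgG le_rfl)

/-- In the CMM model with `G` groups, for `1 ≤ s < G`, `α = Σ_{g=1}^s p_g`, and any `τ`
with `d(τ, σ*) ≥ 1`,
`Pr_s(τ|σ*) ≤ α · φ_s / Z(φ_1, m) + (1 − α) · φ_G / Z(φ_{s+1}, m)`. -/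
theorem cmm_nontruth_prob_upper_bound
    (m G s : ℕ) (hm : 2 ≤ m) (hs : 1 ≤ s) (hsG : s < G) (p φ : ℕ → ℝ)
    (hp : ∀ g ∈ Finset.Icc 1 G, 0 ≤ p g)
    (hpsum : ∑ g ∈ Finset.Icc 1 G, p g = 1)
    (hφpos : 0 < φ 1)
    (hφmono : ∀ g h, 1 ≤ g → g ≤ h → h ≤ G → φ g ≤ φ h)
    (hφle : φ G ≤ 1)
    (σstar τ : Equiv.Perm (Fin m)) (hτ : 1 ≤ kendallTau τ σstar) :
    cmmProb m G p φ τ σstar ≤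
      (∑ g ∈ Finset.Icc 1 s, p g) * φ s / mallowsZ m (φ 1)
        + (1 - ∑ g ∈ Finset.Icc 1 s, p g) * φ G / mallowsZ m (φ (s + 1)) :=
  cmm_nontruth_prob_upper_bound_general m G s hsG p φ hp hpsum hφpos hφmono hφle σstar τ hτ
end

section
/- If θ ∈ ℝ^m has strictly positive, nonincreasing entries (θ_1 ≥ θ_2 ≥ … ≥ θ_m > 0), then for every permutation τ ∈ S_m the Plackett–Luce probability satisfies PL(τ;θ) ≥ PL(rev;θ) = ∏_{j=1}^m θ_{m−j+1}/(Σ_{i=j}^m θ_{m−i+1}), i.e., the order-reversing permutation minimizes the Plackett–Luce probability. -/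
/-!
Every `PL(τ; θ)` has the same numerator `∏ θ_i`, so only the denominators, the tail sums
`Σ_{i ≥ j} θ_{τ(i)}`, matter. The `j`-th tail sum is a sum of `θ` over `m - j` indices; for
nonincreasing `θ` no such sum exceeds the sum of the `m - j` largest entries, and this is exactly
the `j`-th tail sum of the reversal. Hence the reversal has the largest denominator.
-/

/-- Plackett–Luce probability of the permutation `τ` under the strength vector `θ`:
`PL(τ; θ) = ∏_{j=1}^m θ_{τ(j)} / (Σ_{i=j}^m θ_{τ(i)})`. -/
noncomputable def plProb {m : ℕ} (θ : Fin m → ℝ) (τ : Equiv.Perm (Fin m)) : ℝ :=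
  ∏ j : Fin m, θ (τ j) / ∑ i ∈ Finset.univ.filter (fun i => j ≤ i), θ (τ i)

open Finset

theorem Antitone.sum_le_sum_Iic_of_card_eq {α β : Type*} [LinearOrder α] [LocallyFiniteOrderBot α]
    [AddCommMonoid β] [PartialOrder β] [IsOrderedCancelAddMonoid β] {f : α → β}
    (hf : Antitone f) {s : Finset α} {b : α} (hs : #s = #(Iic b)) :
    ∑ x ∈ s, f x ≤ ∑ x ∈ Iic b, f x := by
  classical
  -- Exchange argument: what `s` has beyond `Iic b` lies above `b`, what it misses lies below.
  rw [← sum_sdiff_le_sum_sdiff]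
  calc ∑ x ∈ s \ Iic b, f x
      ≤ #(s \ Iic b) • f b :=
        sum_le_card_nsmul _ _ _ fun x hx => hf (not_le.1 (by simpa using (mem_sdiff.1 hx).2)).le
    _ = #(Iic b \ s) • f b := by rw [card_sdiff_comm hs]
    _ ≤ ∑ x ∈ Iic b \ s, f x :=
        card_nsmul_le_sum _ _ _ fun x hx => hf (mem_Iic.1 (mem_sdiff.1 hx).1)

section PlackettLuce

variable {m : ℕ} (θ : Fin m → ℝ)

theorem plProb_eq_prod_div_prod_sum_Ici (τ : Equiv.Perm (Fin m)) :
    plProb θ τ = (∏ i, θ i) / ∏ j, ∑ i ∈ Ici j, θ (τ i) := by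
  simp only [plProb, prod_div_distrib, Equiv.prod_comp, filter_le_eq_Ici]

theorem sum_Ici_revPerm (j : Fin m) : ∑ i ∈ Ici j, θ (Fin.revPerm i) = ∑ i ∈ Iic j.rev, θ i := by
  rw [← Fin.map_revPerm_Ici, sum_map]
  rfl

variable {θ}

theorem sum_Ici_perm_le_sum_Ici_revPerm (hθ : Antitone θ) (τ : Equiv.Perm (Fin m)) (j : Fin m) :
    ∑ i ∈ Ici j, θ (τ i) ≤ ∑ i ∈ Ici j, θ (Fin.revPerm i) := by
  have hcard : #((Ici j).map τ.toEmbedding) = #(Iic j.rev) := by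
    rw [card_map, ← Fin.map_revPerm_Ici, card_map]
  rw [sum_Ici_revPerm]
  simpa only [sum_map, Equiv.coe_toEmbedding] using hθ.sum_le_sum_Iic_of_card_eq hcard

theorem sum_Ici_perm_pos (hθ : ∀ i, 0 < θ i) (τ : Equiv.Perm (Fin m)) (j : Fin m) :
    0 < ∑ i ∈ Ici j, θ (τ i) :=
  sum_pos (fun i _ => hθ (τ i)) ⟨j, mem_Ici.2 le_rfl⟩

end PlackettLuce

theorem pl_rev_minimizes_general
    (m : ℕ) (θ : Fin m → ℝ)
    (hpos : ∀ j, 0 < θ j) (hanti : Antitone θ) :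
    ∀ τ : Equiv.Perm (Fin m), plProb θ τ ≥ plProb θ (Fin.revPerm : Equiv.Perm (Fin m)) := by
  intro τ
  rw [ge_iff_le, plProb_eq_prod_div_prod_sum_Ici, plProb_eq_prod_div_prod_sum_Ici]
  exact div_le_div_of_nonneg_left (prod_nonneg fun i _ => (hpos i).le)
    (prod_pos fun j _ => sum_Ici_perm_pos hpos τ j)
    (prod_le_prod (fun j _ => (sum_Ici_perm_pos hpos τ j).le)
      fun j _ => sum_Ici_perm_le_sum_Ici_revPerm hanti τ j)

/-- If `θ` has strictly positive, nonincreasing entries, then the order-reversing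
permutation minimizes the Plackett–Luce probability: `PL(τ; θ) ≥ PL(rev; θ)` for every `τ`. -/
theorem pl_rev_minimizes
    (m : ℕ) (hm : 2 ≤ m) (θ : Fin m → ℝ)
    (hpos : ∀ j, 0 < θ j) (hanti : Antitone θ) :
    ∀ τ : Equiv.Perm (Fin m), plProb θ τ ≥ plProb θ (Fin.revPerm : Equiv.Perm (Fin m)) :=
  pl_rev_minimizes_general m θ hpos hanti
end

section
/- Let θ, θ' ∈ ℝ^m have strictly positive, nonincreasing entries with Σ_j θ_j = Σ_j θ'_j = 1, and suppose θ stochastically dominates θ' (Σ_{j=1}^ℓ θ_j ≥ Σ_{j=1}^ℓ θ'_j for every ℓ). Then PL(rev;θ') ≥ PL(rev;θ), i.e., the Plackett–Luce probability of the order-reversing permutation under the dominated vector θ' is at least that under θ. -/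
/-!
Write `S k` for the sum of the first `k` entries of `θ` and `r k = S (k + 1) / S (k + 2)`. Then
`PL(rev; θ) = ∏_{k < m - 1} (1 - r k)` and `∏_{l ≤ k < m - 1} r k = S (l + 1) / S m`, so dominance
says that each tail product of the ratios `r'` of `θ'` is at most the corresponding one for `θ`;
moreover `r'` is nondecreasing, because the prefix sums of an antitone vector are log-concave.
As a function of `u = -log r`, `log (1 - r)` is concave and increasing, so this is an inequality
of Tomić–Weyl type: bound each `log (1 - r k)` by the tangent at `r' k`; the tangent slopes
`r' k / (1 - r' k)` are nonnegative and nondecreasing, so by Abel summation they pair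
nonnegatively with `log r - log r'`, whose tail sums are nonnegative.
-/

open Finset Real

section AbelSummation

variable {R : Type*} [Semiring R] [PartialOrder R] [IsOrderedRing R] {c d : ℕ → R} {n : ℕ}

theorem mul_sum_Ico_le_sum_Ico_mul_of_monotoneOn (hc : MonotoneOn c (Set.Iio n))
    (hd : ∀ l ≤ n, 0 ≤ ∑ i ∈ Ico l n, d i) {l : ℕ} (hl : l ≤ n) :
    c l * ∑ i ∈ Ico l n, d i ≤ ∑ i ∈ Ico l n, c i * d i := by
  induction hl using Nat.decreasingInduction with
  | self => simp
  | of_succ k hk ih =>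
    rw [sum_eq_sum_Ico_succ_bot hk, sum_eq_sum_Ico_succ_bot hk, mul_add]
    gcongr
    rcases (Nat.succ_le_of_lt hk).eq_or_lt with hn | hn
    · simp [← hn]
    · calc c k * ∑ i ∈ Ico (k + 1) n, d i
          ≤ c (k + 1) * ∑ i ∈ Ico (k + 1) n, d i := by
            gcongr
            · exact hd (k + 1) hn.le
            · exact hc (Set.mem_Iio.2 hk) (Set.mem_Iio.2 hn) k.le_succ
        _ ≤ _ := ih

theorem sum_range_mul_nonneg_of_monotoneOn (hc : MonotoneOn c (Set.Iio n))
    (hc0 : ∀ i < n, 0 ≤ c i) (hd : ∀ l ≤ n, 0 ≤ ∑ i ∈ Ico l n, d i) :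
    0 ≤ ∑ i ∈ range n, c i * d i := by
  rcases n.eq_zero_or_pos with rfl | hn
  · simp
  · rw [range_eq_Ico]
    exact (mul_nonneg (hc0 0 hn) (hd 0 n.zero_le)).trans
      (mul_sum_Ico_le_sum_Ico_mul_of_monotoneOn hc hd n.zero_le)

end AbelSummation

theorem prod_Ico_div_add_one_of_ne_zero {G₀ : Type*} [CommGroupWithZero G₀] {f : ℕ → G₀}
    (hf : ∀ k, f k ≠ 0) {l n : ℕ} (hln : l ≤ n) :
    ∏ i ∈ Ico l n, f i / f (i + 1) = f l / f n := by
  induction n, hln using Nat.le_induction with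
  | base => simp [div_self (hf l)]
  | succ n hln ih => rw [prod_Ico_succ_top hln, ih, div_mul_div_cancel₀ (hf n)]

theorem log_one_sub_le_log_one_sub_add {r s : ℝ} (hr : r ∈ Set.Ioo 0 1) (hs : s ∈ Set.Ioo 0 1) :
    log (1 - r) ≤ log (1 - s) + s / (1 - s) * (log s - log r) := by
  obtain ⟨hr0, hr1⟩ := hr
  obtain ⟨hs0, hs1⟩ := hs
  have h1r : 0 < 1 - r := by linarith
  have h1s : 0 < 1 - s := by linarith
  have hquot : log (1 - r) - log (1 - s) ≤ (s - r) / (1 - s) := by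
    rw [← log_div h1r.ne' h1s.ne']
    calc log ((1 - r) / (1 - s)) ≤ (1 - r) / (1 - s) - 1 := log_le_sub_one_of_pos (by positivity)
      _ = (s - r) / (1 - s) := by field_simp; ring
  have hratio : (s - r) / (1 - s) ≤ s / (1 - s) * (log s - log r) := by
    rw [div_mul_eq_mul_div]
    gcongr
    have h := mul_le_mul_of_nonneg_left (log_le_sub_one_of_pos (div_pos hr0 hs0)) hs0.le
    rw [log_div hr0.ne' hs0.ne', mul_sub_one, mul_div_cancel₀ _ hs0.ne'] at h
    linarith
  linarith

theorem prod_one_sub_le_prod_one_sub_of_prod_Ico_le {n : ℕ} {r s : ℕ → ℝ}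
    (hr : ∀ i < n, r i ∈ Set.Ioo 0 1) (hs : ∀ i < n, s i ∈ Set.Ioo 0 1)
    (hs_mono : MonotoneOn s (Set.Iio n))
    (htail : ∀ l ≤ n, ∏ i ∈ Ico l n, s i ≤ ∏ i ∈ Ico l n, r i) :
    ∏ i ∈ range n, (1 - r i) ≤ ∏ i ∈ range n, (1 - s i) := by
  have hr_pos : ∀ i < n, 0 < r i := fun i hi => (hr i hi).1
  have hs_pos : ∀ i < n, 0 < s i := fun i hi => (hs i hi).1
  have hr_one : ∀ i < n, 0 < 1 - r i := fun i hi => sub_pos.2 (hr i hi).2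
  have hs_one : ∀ i < n, 0 < 1 - s i := fun i hi => sub_pos.2 (hs i hi).2
  have htail_log : ∀ l ≤ n, 0 ≤ ∑ i ∈ Ico l n, (log (r i) - log (s i)) := by
    intro l hl
    have hmem : ∀ i ∈ Ico l n, i < n := fun i hi => (mem_Ico.1 hi).2
    rw [sum_sub_distrib, ← log_prod (fun i hi => (hr_pos i (hmem i hi)).ne'),
      ← log_prod (fun i hi => (hs_pos i (hmem i hi)).ne'), sub_nonneg]
    exact log_le_log (prod_pos fun i hi => hs_pos i (hmem i hi)) (htail l hl)
  have hslope_mono : MonotoneOn (fun i => s i / (1 - s i)) (Set.Iio n) :=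
    fun i hi j hj hij => div_le_div₀ (hs_pos j hj).le (hs_mono hi hj hij) (hs_one j hj)
      (by linarith [hs_mono hi hj hij])
  have hpairing := sum_range_mul_nonneg_of_monotoneOn hslope_mono
    (fun i hi => (div_pos (hs_pos i hi) (hs_one i hi)).le) htail_log
  rw [← log_le_log_iff (prod_pos fun i hi => hr_one i (mem_range.1 hi))
      (prod_pos fun i hi => hs_one i (mem_range.1 hi)),
    log_prod fun i hi => (hr_one i (mem_range.1 hi)).ne',
    log_prod fun i hi => (hs_one i (mem_range.1 hi)).ne']
  calc ∑ i ∈ range n, log (1 - r i)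
      ≤ ∑ i ∈ range n, (log (1 - s i) - s i / (1 - s i) * (log (r i) - log (s i))) :=
        sum_le_sum fun i hi => by
          have := log_one_sub_le_log_one_sub_add (hr i (mem_range.1 hi)) (hs i (mem_range.1 hi))
          linarith
    _ ≤ ∑ i ∈ range n, log (1 - s i) := by
        rw [sum_sub_distrib]
        linarith

noncomputable def prefixSum {m : ℕ} (θ : Fin m → ℝ) (k : ℕ) : ℝ :=
  ∑ i ∈ univ.filter (fun i : Fin m => (i : ℕ) < k), θ i

section PrefixSum

variable {m : ℕ} (θ : Fin m → ℝ)

theorem prefixSum_zero : prefixSum θ 0 = 0 := by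
  simp [prefixSum]

theorem prefixSum_self : prefixSum θ m = ∑ j, θ j := by
  simp [prefixSum]

theorem prefixSum_succ {k : ℕ} (hk : k < m) :
    prefixSum θ (k + 1) = prefixSum θ k + θ ⟨k, hk⟩ := by
  have hfilter : univ.filter (fun i : Fin m => (i : ℕ) < k + 1) =
      insert ⟨k, hk⟩ (univ.filter fun i : Fin m => (i : ℕ) < k) := by
    ext i
    simp [Fin.ext_iff]
    omega
  rw [prefixSum, prefixSum, hfilter, sum_insert (by simp), add_comm]

theorem sum_filter_le_eq_prefixSum (j : Fin m) :
    ∑ i ∈ univ.filter (fun i => i ≤ j), θ i = prefixSum θ (j + 1) := by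
  simp only [prefixSum, Nat.lt_succ_iff, Fin.le_def]

theorem plProb_revPerm :
    plProb θ Fin.revPerm = ∏ j, θ j / ∑ i ∈ univ.filter (fun i => i ≤ j), θ i := by
  rw [plProb,
    ← Equiv.prod_comp Fin.revPerm fun j => θ j / ∑ i ∈ univ.filter (fun i => i ≤ j), θ i]
  refine prod_congr rfl fun j _ => ?_
  congr 1
  refine sum_equiv Fin.revPerm (fun i => ?_) fun i _ => rfl
  simp [Fin.rev_le_rev]

end PrefixSum

noncomputable def prefixRatio {m : ℕ} (θ : Fin m → ℝ) (i : ℕ) : ℝ :=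
  prefixSum θ (i + 1) / prefixSum θ (i + 2)

section PrefixRatio

variable {n : ℕ} {θ : Fin (n + 1) → ℝ}

theorem prefixSum_add_one_pos (hθ : ∀ j, 0 < θ j) (k : ℕ) : 0 < prefixSum θ (k + 1) :=
  sum_pos (fun i _ => hθ i) ⟨0, by simp⟩

theorem prefixRatio_mem_Ioo (hθ : ∀ j, 0 < θ j) {i : ℕ} (hi : i < n) :
    prefixRatio θ i ∈ Set.Ioo 0 1 := by
  have hsucc : prefixSum θ (i + 2) = prefixSum θ (i + 1) + θ ⟨i + 1, by omega⟩ :=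
    prefixSum_succ θ _
  have hS := prefixSum_add_one_pos hθ i
  have hθi := hθ ⟨i + 1, by omega⟩
  rw [prefixRatio, hsucc]
  exact ⟨by positivity, (div_lt_one (by positivity)).2 (lt_add_of_pos_right _ hθi)⟩

theorem monotoneOn_prefixRatio (hθ : ∀ j, 0 < θ j) (hanti : Antitone θ) :
    MonotoneOn (prefixRatio θ) (Set.Iio n) := by
  refine monotoneOn_of_le_add_one Set.ordConnected_Iio fun i _ _ hi => ?_
  have hi : i + 1 < n := hi
  have h2 : prefixSum θ (i + 2) = prefixSum θ (i + 1) + θ ⟨i + 1, by omega⟩ :=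
    prefixSum_succ θ _
  have h3 : prefixSum θ (i + 1 + 2) = prefixSum θ (i + 2) + θ ⟨i + 2, by omega⟩ :=
    prefixSum_succ θ _
  have hθ_le : θ ⟨i + 2, by omega⟩ ≤ θ ⟨i + 1, by omega⟩ := hanti (by simp [Fin.le_def])
  have h1 := prefixSum_add_one_pos hθ i
  rw [prefixRatio, prefixRatio, div_le_div_iff₀ (prefixSum_add_one_pos hθ _)
    (prefixSum_add_one_pos hθ _), h3, h2]
  nlinarith [mul_le_mul_of_nonneg_left hθ_le h1.le, sq_nonneg (θ ⟨i + 1, by omega⟩)]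

theorem prod_Ico_prefixRatio (hθ : ∀ j, 0 < θ j) {l : ℕ} (hl : l ≤ n) :
    ∏ i ∈ Ico l n, prefixRatio θ i = prefixSum θ (l + 1) / ∑ j, θ j := by
  rw [← prefixSum_self]
  exact prod_Ico_div_add_one_of_ne_zero (f := fun k => prefixSum θ (k + 1))
    (fun k => (prefixSum_add_one_pos hθ k).ne') hl

theorem plProb_revPerm_eq_prod_one_sub_prefixRatio (hθ : ∀ j, 0 < θ j) :
    plProb θ Fin.revPerm = ∏ i ∈ range n, (1 - prefixRatio θ i) := by
  have hfactor : ∀ j : Fin (n + 1), θ j / ∑ i ∈ univ.filter (fun i => i ≤ j), θ i =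
      1 - prefixSum θ j / prefixSum θ (j + 1) := by
    intro j
    have hpos := prefixSum_add_one_pos hθ j
    rw [sum_filter_le_eq_prefixSum, eq_sub_iff_add_eq, ← add_div,
      div_eq_one_iff_eq hpos.ne', prefixSum_succ θ j.isLt, add_comm]
  rw [plProb_revPerm, prod_congr rfl fun j _ => hfactor j,
    Fin.prod_univ_eq_prod_range (fun k => 1 - prefixSum θ k / prefixSum θ (k + 1)),
    prod_range_succ', prefixSum_zero, zero_div, sub_zero, mul_one]
  rfl

end PrefixRatio

theorem pl_rev_antitone_in_dominance_general
    (m : ℕ) (hm : 2 ≤ m) (θ θ' : Fin m → ℝ)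
    (hpos : ∀ j, 0 < θ j) (hpos' : ∀ j, 0 < θ' j)
    (hanti' : Antitone θ')
    (hsum : ∑ j, θ j = 1) (hsum' : ∑ j, θ' j = 1)
    (hdom : ∀ l : Fin m,
      ∑ j ∈ Finset.univ.filter (fun j => j ≤ l), θ j ≥
        ∑ j ∈ Finset.univ.filter (fun j => j ≤ l), θ' j) :
    plProb θ' (Fin.revPerm : Equiv.Perm (Fin m)) ≥
      plProb θ (Fin.revPerm : Equiv.Perm (Fin m)) := by
  obtain ⟨n, rfl⟩ : ∃ n, m = n + 1 := ⟨m - 1, by omega⟩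
  rw [ge_iff_le, plProb_revPerm_eq_prod_one_sub_prefixRatio hpos,
    plProb_revPerm_eq_prod_one_sub_prefixRatio hpos']
  refine prod_one_sub_le_prod_one_sub_of_prod_Ico_le (fun i hi => prefixRatio_mem_Ioo hpos hi)
    (fun i hi => prefixRatio_mem_Ioo hpos' hi) (monotoneOn_prefixRatio hpos' hanti')
    fun l hl => ?_
  rw [prod_Ico_prefixRatio hpos hl, prod_Ico_prefixRatio hpos' hl, hsum, hsum', div_one, div_one]
  have hdom_l := hdom ⟨l, by omega⟩
  rwa [sum_filter_le_eq_prefixSum, sum_filter_le_eq_prefixSum] at hdom_l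

/-- If `θ` stochastically dominates `θ'` (both positive, nonincreasing, summing to `1`),
then the Plackett–Luce probability of the order-reversing permutation under the dominated
vector is at least that under the dominating one: `PL(rev; θ') ≥ PL(rev; θ)`. -/
theorem pl_rev_antitone_in_dominance
    (m : ℕ) (hm : 2 ≤ m) (θ θ' : Fin m → ℝ)
    (hpos : ∀ j, 0 < θ j) (hpos' : ∀ j, 0 < θ' j)
    (hanti : Antitone θ) (hanti' : Antitone θ')
    (hsum : ∑ j, θ j = 1) (hsum' : ∑ j, θ' j = 1)
    (hdom : ∀ l : Fin m,
      ∑ j ∈ Finset.univ.filter (fun j => j ≤ l), θ j ≥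
        ∑ j ∈ Finset.univ.filter (fun j => j ≤ l), θ' j) :
    plProb θ' (Fin.revPerm : Equiv.Perm (Fin m)) ≥
      plProb θ (Fin.revPerm : Equiv.Perm (Fin m)) :=
  pl_rev_antitone_in_dominance_general m hm θ θ' hpos hpos' hanti' hsum hsum' hdom
end

section
/- In the two-group concentric mixture of Plackett–Luce model with ground truth the identity permutation, weight p ≤ 1/2 on the expert group with parameter θ_1, and weight 1−p on the non-expert group with parameter θ_2 (both nonincreasing, positive, summing to 1, with θ_1 stochastically dominating θ_2), for every permutation τ and every reference ranking σ̃ one has Pr_s(τ|σ̃) ≥ 2p·PL(rev;θ_1) = 2p·∏_{j=1}^m θ_{1,m−j+1}/(Σ_{i=j}^m θ_{1,m−i+1}). -/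
/-- Two-group concentric mixture of Plackett–Luce with ground truth `id`:
`Pr_s(σ | σ̃) = p · ∏_j θ₁(σ̃⁻¹(σ(j)))/(Σ_{i≥j} θ₁(σ̃⁻¹(σ(i))))
             + (1−p) · ∏_j θ₂(σ̃⁻¹(σ(j)))/(Σ_{i≥j} θ₂(σ̃⁻¹(σ(i))))`. -/
noncomputable def cmpl2 {m : ℕ} (p : ℝ) (θ₁ θ₂ : Fin m → ℝ) (σ σ' : Equiv.Perm (Fin m)) : ℝ :=
  p * plProb θ₁ (σ'⁻¹ * σ) + (1 - p) * plProb θ₂ (σ'⁻¹ * σ)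

open Finset

theorem Antitone.sum_le_sum_of_isLowerSet {α β : Type*} [LinearOrder α] [AddCommMonoid β]
    [PartialOrder β] [IsOrderedAddMonoid β] {f : α → β} (hf : Antitone f) {s t : Finset α}
    (ht : IsLowerSet (t : Set α)) (hst : #s = #t) :
    ∑ i ∈ s, f i ≤ ∑ i ∈ t, f i := by
  classical
  rw [← sum_inter_add_sum_sdiff s t, ← sum_inter_add_sum_sdiff t s, inter_comm]
  refine add_le_add le_rfl ?_
  obtain hempty | ⟨a, ha⟩ := (s \ t).eq_empty_or_nonempty
  · have : #(t \ s) = 0 := by rw [← card_sdiff_comm hst, hempty, card_empty]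
    simp [hempty, card_eq_zero.mp this]
  set b := (s \ t).min' ⟨a, ha⟩
  have hb : b ∈ s \ t := min'_mem _ _
  have hlt : ∀ y ∈ t \ s, y < b := fun y hy =>
    not_le.mp fun hby => (mem_sdiff.mp hb).2 (ht hby (mem_sdiff.mp hy).1)
  calc ∑ i ∈ s \ t, f i ≤ #(s \ t) • f b :=
        sum_le_card_nsmul _ _ _ fun i hi => hf (min'_le _ _ hi)
    _ = #(t \ s) • f b := by rw [card_sdiff_comm hst]
    _ ≤ ∑ i ∈ t \ s, f i := card_nsmul_le_sum _ _ _ fun i hi => hf (hlt i hi).le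

theorem Finset.sum_mul_le_mul_sum_of_prefix_sum_nonneg {α R : Type*} [LinearOrder α]
    [CommRing R] [PartialOrder R] [IsOrderedRing R] {c e : α → R} (hc : Monotone c)
    (s : Finset α) (he : ∀ l ∈ s, 0 ≤ ∑ i ∈ s with i ≤ l, e i) {x : R}
    (hx : ∀ i ∈ s, c i ≤ x) :
    ∑ i ∈ s, c i * e i ≤ x * ∑ i ∈ s, e i := by
  classical
  induction s using Finset.induction_on_max generalizing x with
  | empty => simp
  | insert a s hlt ih =>
    have ha : a ∉ s := fun h => lt_irrefl a (hlt a h)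
    have hfilter : ∀ l ∈ s, (insert a s).filter (· ≤ l) = s.filter (· ≤ l) := by
      intro l hl
      rw [filter_insert, if_neg (not_le.mpr (hlt l hl))]
    have hs : ∑ i ∈ s, c i * e i ≤ c a * ∑ i ∈ s, e i :=
      ih (fun l hl => hfilter l hl ▸ he l (mem_insert_of_mem hl))
        (fun i hi => hc (hlt i hi).le)
    have htotal : 0 ≤ ∑ i ∈ insert a s, e i := by
      have := he a (mem_insert_self a s)
      rwa [filter_true_of_mem fun i hi => ?_] at this
      rcases mem_insert.mp hi with rfl | hi
      exacts [le_rfl, (hlt i hi).le]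
    calc ∑ i ∈ insert a s, c i * e i ≤ c a * ∑ i ∈ insert a s, e i := by
          rw [sum_insert ha, sum_insert ha, mul_add]; gcongr
      _ ≤ x * ∑ i ∈ insert a s, e i :=
          mul_le_mul_of_nonneg_right (hx a (mem_insert_self a s)) htotal

theorem prod_le_prod_of_prefix_sum_le {α : Type*} [Fintype α] [LinearOrder α] {θ₁ θ₂ : α → ℝ}
    (hθ₁ : ∀ j, 0 ≤ θ₁ j) (hθ₂ : ∀ j, 0 < θ₂ j) (hanti₂ : Antitone θ₂)
    (hsum : ∑ j, θ₁ j = ∑ j, θ₂ j)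
    (hdom : ∀ l, ∑ j with j ≤ l, θ₂ j ≤ ∑ j with j ≤ l, θ₁ j) :
    ∏ j, θ₁ j ≤ ∏ j, θ₂ j := by
  have hinv : ∀ j, 0 ≤ (θ₂ j)⁻¹ := fun j => (inv_pos.2 (hθ₂ j)).le
  have key : ∑ j, (θ₂ j)⁻¹ * (θ₁ j - θ₂ j) ≤ 0 := by
    have := univ.sum_mul_le_mul_sum_of_prefix_sum_nonneg (e := fun j => θ₁ j - θ₂ j)
      (fun i j hij => inv_anti₀ (hθ₂ j) (hanti₂ hij))
      (fun l _ => by rw [sum_sub_distrib, sub_nonneg]; exact hdom l)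
      (fun i _ => single_le_sum (fun j _ => hinv j) (mem_univ i))
    rwa [sum_sub_distrib, hsum, sub_self, mul_zero] at this
  calc ∏ j, θ₁ j = (∏ j, θ₂ j) * ∏ j, θ₁ j / θ₂ j := by
        rw [← prod_mul_distrib]
        exact prod_congr rfl fun j _ => (mul_div_cancel₀ _ (hθ₂ j).ne').symm
    _ ≤ (∏ j, θ₂ j) * ∏ j, Real.exp ((θ₂ j)⁻¹ * (θ₁ j - θ₂ j)) := by
        refine mul_le_mul_of_nonneg_left (prod_le_prod (fun j _ => ?_) fun j _ => ?_)
          (prod_nonneg fun j _ => (hθ₂ j).le)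
        · exact div_nonneg (hθ₁ j) (hθ₂ j).le
        · rw [mul_sub, inv_mul_cancel₀ (hθ₂ j).ne', inv_mul_eq_div]
          linarith [Real.add_one_le_exp (θ₁ j / θ₂ j - 1)]
    _ ≤ ∏ j, θ₂ j := by
        rw [← Real.exp_sum]
        exact mul_le_of_le_one_right (prod_nonneg fun j _ => (hθ₂ j).le)
          (Real.exp_le_one_iff.2 key)

theorem plProb_eq_prod_div {m : ℕ} (θ : Fin m → ℝ) (τ : Equiv.Perm (Fin m)) :
    plProb θ τ = (∏ j, θ j) / ∏ j, ∑ k ∈ (Ici j).map τ.toEmbedding, θ k := by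
  simp only [plProb, prod_div_distrib, Equiv.prod_comp, sum_map, Equiv.coe_toEmbedding,
    filter_le_eq_Ici]

theorem plProb_revPerm_s14 {m : ℕ} (θ : Fin m → ℝ) :
    plProb θ Fin.revPerm = (∏ j, θ j) / ∏ l, ∑ k ∈ Iic l, θ k := by
  simp only [plProb_eq_prod_div, Fin.map_revPerm_Ici]
  rw [← Equiv.prod_comp Fin.revPerm (fun l => ∑ k ∈ Iic l, θ k)]
  rfl

theorem plProb_nonneg {m : ℕ} {θ : Fin m → ℝ} (hθ : ∀ j, 0 ≤ θ j) (τ : Equiv.Perm (Fin m)) :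
    0 ≤ plProb θ τ :=
  prod_nonneg fun _ _ => div_nonneg (hθ _) (sum_nonneg fun _ _ => hθ _)

theorem plProb_revPerm_le {m : ℕ} {θ : Fin m → ℝ} (hθ : ∀ j, 0 < θ j) (hanti : Antitone θ)
    (τ : Equiv.Perm (Fin m)) : plProb θ Fin.revPerm ≤ plProb θ τ := by
  rw [plProb_eq_prod_div, plProb_eq_prod_div]
  have hpos : 0 < ∏ j, ∑ k ∈ (Ici j).map τ.toEmbedding, θ k :=
    prod_pos fun j _ => sum_pos (fun k _ => hθ k) ⟨τ j, mem_map_of_mem _ (mem_Ici.2 le_rfl)⟩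
  refine div_le_div_of_nonneg_left (prod_nonneg fun j _ => (hθ j).le) hpos
    (prod_le_prod (fun j _ => sum_nonneg fun k _ => (hθ k).le) fun j _ => ?_)
  -- the tail of `rev` at `j` is the initial segment `Iic j.rev`, of the same size as any tail
  refine hanti.sum_le_sum_of_isLowerSet ?_ (by simp only [card_map])
  rw [Fin.map_revPerm_Ici, coe_Iic]
  exact isLowerSet_Iic _

theorem plProb_revPerm_le_of_prefix_sum_le {m : ℕ} {θ₁ θ₂ : Fin m → ℝ}
    (hθ₁ : ∀ j, 0 < θ₁ j) (hθ₂ : ∀ j, 0 < θ₂ j) (hanti₂ : Antitone θ₂)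
    (hsum : ∑ j, θ₁ j = ∑ j, θ₂ j)
    (hdom : ∀ l, ∑ j with j ≤ l, θ₂ j ≤ ∑ j with j ≤ l, θ₁ j) :
    plProb θ₁ Fin.revPerm ≤ plProb θ₂ Fin.revPerm := by
  rw [plProb_revPerm_s14, plProb_revPerm_s14]
  refine div_le_div₀ (prod_nonneg fun j _ => (hθ₂ j).le)
    (prod_le_prod_of_prefix_sum_le (fun j => (hθ₁ j).le) hθ₂ hanti₂ hsum hdom) ?_ ?_
  · exact prod_pos fun l _ => sum_pos (fun k _ => hθ₂ k) nonempty_Iic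
  · refine prod_le_prod (fun l _ => sum_nonneg fun k _ => (hθ₂ k).le) fun l _ => ?_
    simpa only [filter_ge_eq_Iic] using hdom l

theorem cmpl2_lower_bound_any_reference_general
    (m : ℕ) (p : ℝ) (θ₁ θ₂ : Fin m → ℝ)
    (hp0 : 0 ≤ p) (hp : p ≤ 1 / 2)
    (hpos₁ : ∀ j, 0 < θ₁ j) (hpos₂ : ∀ j, 0 < θ₂ j)
    (hanti₁ : Antitone θ₁) (hanti₂ : Antitone θ₂)
    (hsum₁ : ∑ j, θ₁ j = 1) (hsum₂ : ∑ j, θ₂ j = 1)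
    (hdom : ∀ l : Fin m,
      ∑ j ∈ Finset.univ.filter (fun j => j ≤ l), θ₁ j ≥
        ∑ j ∈ Finset.univ.filter (fun j => j ≤ l), θ₂ j) :
    ∀ τ σt : Equiv.Perm (Fin m),
      cmpl2 p θ₁ θ₂ τ σt ≥ 2 * p * plProb θ₁ (Fin.revPerm : Equiv.Perm (Fin m)) := by
  intro τ σt
  set R := plProb θ₁ Fin.revPerm
  have hR : 0 ≤ R := plProb_nonneg (fun j => (hpos₁ j).le) _
  have h₁ : R ≤ plProb θ₁ (σt⁻¹ * τ) := plProb_revPerm_le hpos₁ hanti₁ _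
  have h₂ : R ≤ plProb θ₂ (σt⁻¹ * τ) :=
    (plProb_revPerm_le_of_prefix_sum_le hpos₁ hpos₂ hanti₂ (hsum₁.trans hsum₂.symm) hdom).trans
      (plProb_revPerm_le hpos₂ hanti₂ _)
  calc 2 * p * R ≤ p * R + (1 - p) * R := by nlinarith
    _ ≤ cmpl2 p θ₁ θ₂ τ σt := by
      unfold cmpl2
      gcongr
      linarith

/-- In the two-group CMPL model with `p ≤ 1/2` and `θ₁` stochastically dominating `θ₂`,
for every permutation `τ` and every reference ranking `σ̃`,
`Pr_s(τ|σ̃) ≥ 2p·PL(rev;θ₁)`. -/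
theorem cmpl2_lower_bound_any_reference
    (m : ℕ) (hm : 2 ≤ m) (p : ℝ) (θ₁ θ₂ : Fin m → ℝ)
    (hp0 : 0 ≤ p) (hp : p ≤ 1 / 2)
    (hpos₁ : ∀ j, 0 < θ₁ j) (hpos₂ : ∀ j, 0 < θ₂ j)
    (hanti₁ : Antitone θ₁) (hanti₂ : Antitone θ₂)
    (hsum₁ : ∑ j, θ₁ j = 1) (hsum₂ : ∑ j, θ₂ j = 1)
    (hdom : ∀ l : Fin m,
      ∑ j ∈ Finset.univ.filter (fun j => j ≤ l), θ₁ j ≥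
        ∑ j ∈ Finset.univ.filter (fun j => j ≤ l), θ₂ j) :
    ∀ τ σt : Equiv.Perm (Fin m),
      cmpl2 p θ₁ θ₂ τ σt ≥ 2 * p * plProb θ₁ (Fin.revPerm : Equiv.Perm (Fin m)) :=
  cmpl2_lower_bound_any_reference_general m p θ₁ θ₂ hp0 hp hpos₁ hpos₂ hanti₁ hanti₂ hsum₁ hsum₂
    hdom
end
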